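/- Quantitative failure of the sharp-filter energy estimate for the 1D Saint-Venant symmetrizer: let S(U) = diag(1, 1+η), A(U) = [[u, 1+η],[1, u]] with U = (η_p, u_p), η_p(x) = -(1/2)cos(px), u_p(x) = sin(px), and let V_N = (0, sin((N-q)x)) with 0 ≤ q < p fixed. Define J_N(U, V) = ( P_N( S(U)(Id - P_N)( A(U) ∂_x(P_N V) ) ), V )_{L^2(2πT)}, where P_N is the sharp Fourier projection onto modes |k| ≤ N. Then J_N(U, V_N) = -(π/8)(N - q) + O(1) as N → ∞; in particular J_N(U, V_N) is not bounded uniformly in N even though |V_N|_{L^2} is bounded. -/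

import Mathlib

open MeasureTheory Real Complex

noncomputable section

/-- Fourier coefficient of a `2π`-periodic function on `ℝ`. -/
def fc (f : ℝ → ℂ) (k : ℤ) : ℂ :=
  (2 * π : ℂ)⁻¹ * ∫ x in Set.Ioc (-π) π, f x * Complex.exp (-(Complex.I * (k : ℂ) * (x : ℂ)))

/-- Reconstruction of a function from its Fourier coefficients. -/
def recon1 (c : ℤ → ℂ) (x : ℝ) : ℂ :=
  ∑' k : ℤ, c k * Complex.exp (Complex.I * (k : ℂ) * (x : ℂ))

/-- The sharp Fourier projection onto modes `|k| ≤ N`. -/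
def PN (N : ℕ) (f : ℝ → ℂ) : ℝ → ℂ :=
  recon1 fun k => if |k| ≤ (N : ℤ) then fc f k else 0

/-- `∂_x ∘ P_N`. -/
def DxPN (N : ℕ) (f : ℝ → ℂ) : ℝ → ℂ :=
  recon1 fun k => if |k| ≤ (N : ℤ) then Complex.I * (k : ℂ) * fc f k else 0

/-- The quantity `J_N(U, V_N) = (P_N(S(U)(Id-P_N)(A(U)∂_x(P_N V_N))), V_N)_{L²}` for the 1D
Saint-Venant symmetrizer `S(U) = diag(1, 1+η)`, `A(U) = [[u, 1+η],[1, u]]`, with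
`U = (η_p, u_p)`, `η_p = -(1/2)cos(px)`, `u_p = sin(px)` and `V_N = (0, sin((N-q)x))`. -/
def JN (p q N : ℕ) : ℝ :=
  let ηc : ℝ → ℂ := fun x => ((-(1 / 2) * Real.cos (p * x) : ℝ) : ℂ)
  let uc : ℝ → ℂ := fun x => ((Real.sin (p * x) : ℝ) : ℂ)
  let V1 : ℝ → ℂ := fun _ => 0
  let V2 : ℝ → ℂ := fun x => ((Real.sin (((N : ℝ) - (q : ℝ)) * x) : ℝ) : ℂ)
  let W1 := DxPN N V1
  let W2 := DxPN N V2
  let B1 : ℝ → ℂ := fun x => uc x * W1 x + (1 + ηc x) * W2 x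
  let B2 : ℝ → ℂ := fun x => W1 x + uc x * W2 x
  let C1 : ℝ → ℂ := fun x => B1 x - PN N B1 x
  let C2 : ℝ → ℂ := fun x => B2 x - PN N B2 x
  let SC2 : ℝ → ℂ := fun x => (1 + ηc x) * C2 x
  let D1 := PN N C1
  let D2 := PN N SC2
  (∫ x in Set.Ioc (-π) π,
    (D1 x * (starRingEnd ℂ) (V1 x) + D2 x * (starRingEnd ℂ) (V2 x))).re

/-!
Only second components matter, since `V_N` has none in the first. Write `M = N - q`. Then
`P_N V_N = V_N` and `∂ₓ P_N V_N = (0, M cos (M x))`, and multiplying by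
`u_p = sin (p x)` produces the frequencies `M - p` and `M + p`. Since `q < p`, only `M + p > N`
survives `Id - P_N`. The factor `1 + η_p = 1 - cos (p x) / 2` of `S(U)` sends part of
`sin ((M + p) x)` back to frequency `M`, so `P_N (S(U) (Id - P_N) (...)) = (0, -(M / 8) sin (M x))`,
whose pairing with `V_N` is exactly `-(π / 8) M` as soon as `N > p + q`. The projections are
evaluated on finite sine series through the orthogonality of the exponentials `exp (i k x)`.
-/

def expMode (k : ℤ) (x : ℝ) : ℂ := Complex.exp (Complex.I * k * x)

lemma continuous_expMode (k : ℤ) : Continuous (expMode k) := by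
  unfold expMode; fun_prop

lemma expMode_add (a b : ℤ) (x : ℝ) : expMode (a + b) x = expMode a x * expMode b x := by
  simp only [expMode, ← Complex.exp_add]
  push_cast
  ring_nf

lemma integral_expMode (k : ℤ) :
    ∫ x in Set.Ioc (-π) π, expMode k x = if k = 0 then (2 * π : ℂ) else 0 := by
  rw [← intervalIntegral.integral_of_le (by linarith [Real.pi_pos])]
  split_ifs with hk
  · simp [hk, expMode, two_mul]
  · have hc : Complex.I * k ≠ 0 := by simp [Complex.I_ne_zero, hk]
    simp only [expMode, integral_exp_mul_complex hc]
    -- the endpoints differ by `2πk`, a period of `exp (I k ·)`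
    have hper : Complex.I * k * (π : ℂ)
        = Complex.I * k * ((-π : ℝ) : ℂ) + k * (2 * π * Complex.I) := by
      push_cast; ring
    rw [hper, Complex.exp_add, Complex.exp_int_mul_two_pi_mul_I, mul_one, sub_self, zero_div]

lemma fc_sum_expMode {ι : Type*} [Fintype ι] (c : ι → ℂ) (m : ι → ℤ) (k : ℤ) :
    fc (fun x => ∑ i, c i * expMode (m i) x) k = ∑ i, if m i = k then c i else 0 := by
  have hshift : ∀ x : ℝ, (∑ i, c i * expMode (m i) x) * Complex.exp (-(Complex.I * k * x))
      = ∑ i, c i * expMode (m i - k) x := by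
    intro x
    have hconj : Complex.exp (-(Complex.I * k * x)) = expMode (-k) x := by
      simp [expMode, mul_assoc]
    rw [hconj]
    simp only [Finset.sum_mul, mul_assoc, ← expMode_add, sub_eq_add_neg]
  simp only [fc, hshift]
  rw [integral_finsetSum _ fun i _ => ((continuous_expMode _).integrableOn_Ioc).const_mul (c i),
    Finset.mul_sum]
  refine Finset.sum_congr rfl fun i _ => ?_
  simp only [integral_const_mul, integral_expMode, sub_eq_zero]
  split_ifs
  · field_simp
  · simp

lemma recon1_eq_sum (s : Finset ℤ) (c : ℤ → ℂ) (hc : ∀ k ∉ s, c k = 0) (x : ℝ) :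
    recon1 c x = ∑ k ∈ s, c k * expMode k x :=
  tsum_eq_sum fun k hk => by simp [hc k hk]

def truncatedMultiplier (N : ℕ) (μ : ℤ → ℂ) (f : ℝ → ℂ) : ℝ → ℂ :=
  recon1 fun k => if |k| ≤ (N : ℤ) then μ k * fc f k else 0

lemma PN_eq_truncatedMultiplier (N : ℕ) (f : ℝ → ℂ) :
    PN N f = truncatedMultiplier N 1 f := by
  simp [PN, truncatedMultiplier]

lemma DxPN_eq_truncatedMultiplier (N : ℕ) (f : ℝ → ℂ) :
    DxPN N f = truncatedMultiplier N (fun k => Complex.I * k) f := rfl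

lemma truncatedMultiplier_sum_expMode {ι : Type*} [Fintype ι] (N : ℕ) (μ : ℤ → ℂ)
    (c : ι → ℂ) (m : ι → ℤ) (x : ℝ) :
    truncatedMultiplier N μ (fun x => ∑ i, c i * expMode (m i) x) x
      = ∑ i, if |m i| ≤ (N : ℤ) then μ (m i) * c i * expMode (m i) x else 0 := by
  have hmem : ∀ k : ℤ, k ∈ Finset.Icc (-(N : ℤ)) N ↔ |k| ≤ N := fun k => by
    rw [Finset.mem_Icc, abs_le]
  rw [truncatedMultiplier, recon1_eq_sum (Finset.Icc (-(N : ℤ)) N) _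
    fun k hk => if_neg ((hmem k).not.1 hk)]
  simp only [fc_sum_expMode, ← hmem, ite_mul, zero_mul, Finset.sum_ite_mem, Finset.inter_self,
    Finset.mul_sum, Finset.sum_mul, mul_ite, mul_zero]
  rw [Finset.sum_comm]
  simp only [Finset.sum_ite_eq]

lemma ofReal_sin_int_mul (k : ℤ) (x : ℝ) :
    (Real.sin (k * x) : ℂ) = -(Complex.I / 2) * expMode k x + Complex.I / 2 * expMode (-k) x := by
  simp only [Complex.ofReal_sin, Complex.sin, expMode]
  push_cast
  ring_nf

lemma ofReal_cos_int_mul (k : ℤ) (x : ℝ) :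
    (Real.cos (k * x) : ℂ) = 1 / 2 * expMode k x + 1 / 2 * expMode (-k) x := by
  simp only [Complex.ofReal_cos, Complex.cos, expMode]
  push_cast
  ring_nf

section SineSeries

variable {ι : Type*} [Fintype ι] (N : ℕ) (a : ι → ℝ) (k : ι → ℤ)

lemma truncatedMultiplier_sum_sin (μ : ℤ → ℂ) (x : ℝ) :
    truncatedMultiplier N μ (fun x => ((∑ i, a i * Real.sin (k i * x) : ℝ) : ℂ)) x
      = ∑ i, if |k i| ≤ (N : ℤ) then
          a i * (-(Complex.I / 2) * μ (k i) * expMode (k i) x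
            + Complex.I / 2 * μ (-k i) * expMode (-k i) x) else 0 := by
  have hexp : (fun x => ((∑ i, a i * Real.sin (k i * x) : ℝ) : ℂ))
      = fun x => ∑ j : ι ⊕ ι, Sum.elim (fun i => -(Complex.I / 2) * a i)
          (fun i => Complex.I / 2 * a i) j * expMode (Sum.elim k (fun i => -k i) j) x := by
    funext x
    simp only [Fintype.sum_sum_type, Sum.elim_inl, Sum.elim_inr, ← Finset.sum_add_distrib,
      Complex.ofReal_sum, Complex.ofReal_mul]
    refine Finset.sum_congr rfl fun i _ => ?_
    rw [ofReal_sin_int_mul]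
    ring
  rw [hexp, truncatedMultiplier_sum_expMode, Fintype.sum_sum_type, ← Finset.sum_add_distrib]
  refine Finset.sum_congr rfl fun i _ => ?_
  by_cases hki : |k i| ≤ (N : ℤ)
  · simp only [Sum.elim_inl, Sum.elim_inr, abs_neg]
    simp only [hki, if_true]
    ring
  · simp [hki]

variable {f : ℝ → ℂ} {a k}

lemma PN_apply_of_eq_sum_sin (hf : ∀ x, f x = ((∑ i, a i * Real.sin (k i * x) : ℝ) : ℂ))
    (x : ℝ) :
    PN N f x
      = ((∑ i, if |k i| ≤ (N : ℤ) then a i * Real.sin (k i * x) else 0 : ℝ) : ℂ) := by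
  rw [funext hf, PN_eq_truncatedMultiplier, truncatedMultiplier_sum_sin]
  push_cast
  refine Finset.sum_congr rfl fun i _ => ?_
  split_ifs
  · rw [Complex.ofReal_mul, ofReal_sin_int_mul, Pi.one_apply, Pi.one_apply]
    ring
  · rfl

end SineSeries

lemma DxPN_sin {N : ℕ} {k : ℤ} (hk : |k| ≤ (N : ℤ)) :
    DxPN N (fun x => (Real.sin (k * x) : ℂ)) = fun x => ((k * Real.cos (k * x) : ℝ) : ℂ) := by
  funext x
  have h := truncatedMultiplier_sum_sin N (fun _ : Unit => 1) (fun _ => k)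
    (fun k => Complex.I * k) x
  simp only [one_mul, Finset.univ_unique, Finset.sum_singleton, if_pos hk] at h
  rw [DxPN_eq_truncatedMultiplier, h, Complex.ofReal_mul, ofReal_cos_int_mul]
  push_cast
  linear_combination (-k / 2 * (expMode k x + expMode (-k) x)) * Complex.I_sq

lemma DxPN_zero (N : ℕ) : DxPN N (fun _ => 0) = 0 := by
  funext x
  simp [DxPN, fc, recon1]

lemma integral_sin_int_mul_sq {k : ℤ} (hk : k ≠ 0) :
    ∫ x in Set.Ioc (-π) π, Real.sin (k * x) ^ 2 = π := by
  have hk' : (k : ℝ) ≠ 0 := Int.cast_ne_zero.2 hk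
  rw [← intervalIntegral.integral_of_le (by linarith [Real.pi_pos]),
    intervalIntegral.integral_comp_mul_left (fun x => Real.sin x ^ 2) hk', integral_sin_sq,
    mul_neg, Real.sin_neg, Real.cos_neg, Real.sin_int_mul_pi, smul_eq_mul]
  field_simp
  ring

section Frequencies

variable {N p : ℕ} {M : ℤ}

lemma sub_PN_sin_mul_cos (hpM : p < M) (hMN : M ≤ N) (hNM : N < M + p) (x : ℝ) :
    (Real.sin (p * x) : ℂ) * ((M * Real.cos (M * x) : ℝ) : ℂ)
      - PN N (fun x => (Real.sin (p * x) : ℂ) * ((M * Real.cos (M * x) : ℝ) : ℂ)) x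
      = ((M / 2 * Real.sin ((M + p : ℤ) * x) : ℝ) : ℂ) := by
  have hprod : ∀ x : ℝ, (Real.sin (p * x) : ℂ) * ((M * Real.cos (M * x) : ℝ) : ℂ)
      = ((∑ i, ![(M : ℝ) / 2, -M / 2] i * Real.sin (![M + p, M - p] i * x) : ℝ) : ℂ) := by
    intro x
    rw [← Complex.ofReal_mul]
    congr 1
    simp only [Fin.sum_univ_two, Matrix.cons_val_zero, Matrix.cons_val_one, Int.cast_add,
      Int.cast_sub, Int.cast_natCast, add_mul, sub_mul, Real.sin_add, Real.sin_sub]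
    ring
  rw [PN_apply_of_eq_sum_sin N hprod, hprod, ← Complex.ofReal_sub]
  have hhigh : ¬ |M + p| ≤ N := by rw [abs_le]; omega
  have hlow : |M - p| ≤ N := by rw [abs_le]; omega
  simp [Fin.sum_univ_two, hhigh, hlow]

lemma PN_one_sub_cos_mul_sin (hMN : 0 ≤ M ∧ M ≤ N) (hNM : N < M + p) (x : ℝ) :
    PN N (fun x => (1 + ((-(1 / 2) * Real.cos (p * x) : ℝ) : ℂ))
        * ((M / 2 * Real.sin ((M + p : ℤ) * x) : ℝ) : ℂ)) x
      = ((-M / 8 * Real.sin (M * x) : ℝ) : ℂ) := by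
  have hprod : ∀ x : ℝ, (1 + ((-(1 / 2) * Real.cos (p * x) : ℝ) : ℂ))
        * ((M / 2 * Real.sin ((M + p : ℤ) * x) : ℝ) : ℂ)
      = ((∑ i, ![(M : ℝ) / 2, -M / 8, -M / 8] i * Real.sin (![M + p, M + p + p, M] i * x) : ℝ)
          : ℂ) := by
    intro x
    have key := Real.two_mul_sin_mul_cos ((M + p) * x) (p * x)
    rw [show ((M : ℝ) + p) * x - p * x = M * x by ring,
      show ((M : ℝ) + p) * x + p * x = (M + p + p) * x by ring] at key
    rw [← Complex.ofReal_one, ← Complex.ofReal_add, ← Complex.ofReal_mul]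
    congr 1
    simp only [Fin.sum_univ_three, Matrix.cons_val_zero, Matrix.cons_val_one, Matrix.cons_val_two,
      Matrix.tail_cons, Matrix.head_cons, Int.cast_add, Int.cast_natCast]
    linear_combination (-(M : ℝ) / 8) * key
  rw [PN_apply_of_eq_sum_sin N hprod]
  have hhigh : ¬ |M + p| ≤ N := by rw [abs_le]; omega
  have hhigher : ¬ |M + p + p| ≤ N := by rw [abs_le]; omega
  have hlow : |M| ≤ N := by rw [abs_le]; omega
  simp [Fin.sum_univ_three, hhigh, hhigher, hlow]

end Frequencies

lemma JN_eq_of_lt {p q N : ℕ} (hq : q < p) (hN : p + q < N) :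
    JN p q N = -(π / 8) * ((N : ℝ) - q) := by
  set M : ℤ := N - q with hM
  have hMR : (N : ℝ) - q = M := by simp [hM]
  have hW : DxPN N (fun x => (Real.sin (M * x) : ℂ))
      = fun x => ((M * Real.cos (M * x) : ℝ) : ℂ) :=
    DxPN_sin (abs_le.2 ⟨by omega, by omega⟩)
  have hC := sub_PN_sin_mul_cos (N := N) (p := p) (M := M) (by omega) (by omega) (by omega)
  have hD := PN_one_sub_cos_mul_sin (N := N) (p := p) (M := M) ⟨by omega, by omega⟩ (by omega)
  simp only [JN, DxPN_zero, Pi.zero_apply, mul_zero, zero_add, map_zero, hMR, hW, hC, hD]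
  simp only [Complex.conj_ofReal, ← Complex.ofReal_mul, integral_complex_ofReal,
    Complex.ofReal_re, mul_assoc, ← sq]
  rw [integral_const_mul, integral_sin_int_mul_sq (by omega : M ≠ 0)]
  ring

lemma integral_sin_mul_sq_le (c : ℝ) :
    ∫ x in Set.Ioc (-π) π, Real.sin (c * x) ^ 2 ≤ 2 * π := by
  have hvol : volume.real (Set.Ioc (-π) π) = 2 * π := by
    rw [Real.volume_real_Ioc_of_le (by linarith [Real.pi_pos])]; ring
  calc ∫ x in Set.Ioc (-π) π, Real.sin (c * x) ^ 2
      ≤ ‖∫ x in Set.Ioc (-π) π, Real.sin (c * x) ^ 2‖ := Real.le_norm_self _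
    _ ≤ 1 * volume.real (Set.Ioc (-π) π) :=
        norm_setIntegral_le_of_norm_le_const measure_Ioc_lt_top fun x _ => by
          rw [Real.norm_of_nonneg (sq_nonneg _)]; exact Real.sin_sq_le_one _
    _ = 2 * π := by rw [one_mul, hvol]

/-- Quantitative failure of the sharp-filter energy estimate for the 1D Saint-Venant
symmetrizer: `J_N(U, V_N) = -(π/8)(N - q) + O(1)` as `N → ∞`; in particular `J_N(U, V_N)`
is not bounded uniformly in `N`, even though `|V_N|_{L²}` is bounded. -/
theorem sharp_filter_energy_failure (p q : ℕ) (hq : q < p) :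
    (∃ C : ℝ, ∀ N : ℕ, |JN p q N + π / 8 * ((N : ℝ) - (q : ℝ))| ≤ C) ∧
    (∃ C' : ℝ, ∀ N : ℕ,
      Real.sqrt (∫ x in Set.Ioc (-π) π, Real.sin (((N : ℝ) - (q : ℝ)) * x) ^ 2) ≤ C') ∧
    ¬ ∃ C'' : ℝ, ∀ N : ℕ, |JN p q N| ≤ C'' := by
  have herror :
      Filter.Tendsto (fun N : ℕ => JN p q N + π / 8 * ((N : ℝ) - q)) Filter.atTop (nhds 0) :=
    tendsto_nhds_of_eventually_eq <| (Filter.eventually_gt_atTop (p + q)).mono fun N hN => by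
      rw [JN_eq_of_lt hq hN]; ring
  obtain ⟨C, hC⟩ := isBounded_iff_forall_norm_le.1 (Metric.isBounded_range_of_tendsto _ herror)
  refine ⟨⟨C, fun N => hC _ ⟨N, rfl⟩⟩,
    ⟨Real.sqrt (2 * π), fun N => Real.sqrt_le_sqrt (integral_sin_mul_sq_le _)⟩, ?_⟩
  rintro ⟨C'', hC''⟩
  obtain ⟨N, hN⟩ := exists_nat_gt (q + 8 * (C + C'') / π)
  have hgrowth : π / 8 * ((N : ℝ) - q) ≤ C + C'' := by
    calc π / 8 * ((N : ℝ) - q) ≤ |JN p q N + π / 8 * ((N : ℝ) - q) - JN p q N| := by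
          rw [add_sub_cancel_left]; exact le_abs_self _
      _ ≤ |JN p q N + π / 8 * ((N : ℝ) - q)| + |JN p q N| := abs_sub _ _
      _ ≤ C + C'' := add_le_add (hC _ ⟨N, rfl⟩) (hC'' N)
  have hN' := (div_lt_iff₀ Real.pi_pos).1 (show 8 * (C + C'') / π < N - q by linarith)
  linarith

end
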